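/- arXiv:1904.04942 — 2 statements merged into one kernel-verified Lean document; each statement's English description precedes it below -/
import Mathlib

section
/- Let R be a ring with a discrete valuation v, and assume R has characteristic p for a prime number p. Let x, y ∈ R be commuting elements with v(x) = v(y) = 0 and v(x − y) > 0. Then for every integer n ≥ 1 one has v(x^n − y^n) = p^{v_p(n)} · v(x − y), where v_p(n) denotes the p-adic valuation of n (so p^{v_p(n)} = |n|_p^{-1}). -/
/-!
Write `n = p ^ e * m` with `p ∤ m`. In characteristic `p` the Frobenius gives
`x ^ p ^ e - y ^ p ^ e = (x - y) ^ p ^ e`, of valuation `p ^ e • v (x - y)`, so it remains to see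
that raising `X = x ^ p ^ e` and `Y = y ^ p ^ e`, both of valuation `0`, to a power `m` prime to
`p` does not change `v (X - Y)`. Indeed `X ^ m - Y ^ m = (X - Y) * S` with
`S = ∑ X ^ i * Y ^ (m - 1 - i)`, and `S ≡ m * X ^ (m - 1)` modulo elements of positive
valuation; since `m` is invertible in characteristic `p`, `v S = 0`.
-/

namespace AddValuation

variable {R Γ₀ : Type*} [Ring R] [LinearOrderedAddCommMonoidWithTop Γ₀]
  (v : AddValuation R Γ₀)

theorem map_natCast_nonneg (n : ℕ) : 0 ≤ v n := by
  induction n with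
  | zero => simp
  | succ n ih => rw [Nat.cast_succ]; exact v.map_le_add ih v.map_one.ge

theorem map_natCast_eq_zero_of_not_dvd {p : ℕ} [CharP R p] (hp : p.Prime) {n : ℕ}
    (hn : ¬p ∣ n) : v n = 0 := by
  obtain ⟨k, -, hk⟩ :=
    Nat.exists_mul_mod_eq_one_of_coprime (hp.coprime_iff_not_dvd.2 hn).symm hp.one_lt
  have hnk : (n : R) * k = 1 := by
    rw [← Nat.cast_mul, CharP.natCast_eq_natCast_mod R p, hk, Nat.cast_one]
  have hsum : v n + v k = 0 := by rw [← v.map_mul, hnk, v.map_one]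
  exact ((add_eq_zero_iff_of_nonneg (v.map_natCast_nonneg n) (v.map_natCast_nonneg k)).1 hsum).1

variable {v} {x y : R}

theorem map_sub_le_map_pow_sub_pow (hc : Commute x y) (hx : 0 ≤ v x) (hy : 0 ≤ v y) (k : ℕ) :
    v (x - y) ≤ v (x ^ k - y ^ k) := by
  rw [← hc.mul_geom_sum₂, v.map_mul]
  refine le_add_of_nonneg_right (v.map_le_sum fun i _ ↦ ?_)
  rw [v.map_mul, v.map_pow, v.map_pow]
  exact add_nonneg (nsmul_nonneg hx i) (nsmul_nonneg hy _)

theorem map_pow_eq_zero (hx : v x = 0) (k : ℕ) : v (x ^ k) = 0 := by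
  rw [v.map_pow, hx, nsmul_zero]

theorem map_pow_sub_pow_eq_map_sub (hc : Commute x y) (hx : v x = 0) (hy : v y = 0)
    (hxy : 0 < v (x - y)) {m : ℕ} (hm : v (m : R) = 0) :
    v (x ^ m - y ^ m) = v (x - y) := by
  set S := ∑ i ∈ Finset.range m, x ^ i * y ^ (m - 1 - i)
  have hterm : ∀ i ∈ Finset.range m,
      v (x - y) ≤ v (x ^ i * y ^ (m - 1 - i) - x ^ (m - 1)) := by
    intro i hi
    have hsplit : x ^ (m - 1) = x ^ i * x ^ (m - 1 - i) := by
      rw [← pow_add]; congr 1; have := Finset.mem_range.1 hi; omega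
    rw [hsplit, ← mul_sub, v.map_mul, map_pow_eq_zero hx, zero_add, v.map_sub_swap x]
    exact map_sub_le_map_pow_sub_pow hc.symm hy.ge hx.ge _
  have hS_sub_lead : S - m * x ^ (m - 1) =
      ∑ i ∈ Finset.range m, (x ^ i * y ^ (m - 1 - i) - x ^ (m - 1)) := by
    simp [S, Finset.sum_sub_distrib]
  have hlead : v ((m : R) * x ^ (m - 1)) = 0 := by
    rw [v.map_mul, hm, map_pow_eq_zero hx, add_zero]
  have hS : v S = 0 := by
    refine hlead ▸ v.map_eq_of_lt_sub ?_
    rw [hlead, hS_sub_lead]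
    exact hxy.trans_le (v.map_le_sum hterm)
  rw [← hc.mul_geom_sum₂, v.map_mul, hS, add_zero]

theorem map_pow_sub_pow_of_charP {p : ℕ} [CharP R p] (hp : p.Prime) (hc : Commute x y)
    (hx : v x = 0) (hy : v y = 0) (hxy : 0 < v (x - y)) {n : ℕ} (hn : n ≠ 0) :
    v (x ^ n - y ^ n) = p ^ padicValNat p n • v (x - y) := by
  have : Fact p.Prime := ⟨hp⟩
  obtain ⟨e, m, hm, rfl⟩ := Nat.exists_eq_pow_mul_and_not_dvd hn p hp.ne_one
  have hpe : p ^ e ≠ 0 := pow_ne_zero _ hp.ne_zero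
  have hfrob : v (x ^ p ^ e - y ^ p ^ e) = p ^ e • v (x - y) := by
    rw [← sub_pow_char_pow_of_commute p e hc, v.map_pow]
  rw [padicValNat.mul hpe (right_ne_zero_of_mul hn), padicValNat.prime_pow,
    padicValNat.eq_zero_of_not_dvd hm, add_zero, pow_mul, pow_mul, ← hfrob]
  refine map_pow_sub_pow_eq_map_sub (hc.pow_pow _ _) (map_pow_eq_zero hx _)
    (map_pow_eq_zero hy _) ?_ (v.map_natCast_eq_zero_of_not_dvd hp hm)
  rw [hfrob]
  exact nsmul_pos hxy hpe

end AddValuation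

/-- In a ring of prime characteristic p with a discrete valuation:
for commuting x, y with v(x) = v(y) = 0 and v(x − y) > 0, one has
v(xⁿ − yⁿ) = p^{v_p(n)} · v(x − y) for all n ≥ 1. -/
theorem valuation_powers_char_p {R : Type*} [Ring R]
    (p : ℕ) (hp : p.Prime) [CharP R p]
    (v : R → WithTop ℤ)
    (hv0 : ∀ x : R, v x = ⊤ ↔ x = 0)
    (hvmul : ∀ x y : R, v (x * y) = v x + v y)
    (hvadd : ∀ x y : R, min (v x) (v y) ≤ v (x + y))
    (x y : R) (hcomm : x * y = y * x)
    (hvx : v x = 0) (hvy : v y = 0) (hxy : 0 < v (x - y)) :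
    ∀ n : ℕ, 1 ≤ n → v (x ^ n - y ^ n) = (p ^ padicValNat p n) • v (x - y) := by
  intro n hn
  have : Nontrivial R := CharP.nontrivial_of_char_ne_one hp.ne_one
  have hv1 : v 1 = 0 :=
    WithTop.add_left_cancel ((hv0 1).not.2 one_ne_zero) (by rw [← hvmul, one_mul, add_zero])
  let w : AddValuation R (WithTop ℤ) := .of v ((hv0 0).2 rfl) hv1 hvadd hvmul
  exact w.map_pow_sub_pow_of_charP hp hcomm hvx hvy hxy (by omega)
end

section
/- Let R be a (not necessarily commutative) ring with a discrete valuation v having nonnegative values, let Γ be a finite subgroup of the group of units of R, let σ ∈ R, and let m ≥ 0 be an integer. Suppose s is the least positive integer such that v(σ^s − γ) ≥ m for some γ ∈ Γ, and fix γ₀ ∈ Γ with v(σ^s − γ₀) ≥ m. Then for every integer n ≥ 1 and every γ ∈ Γ: v(σ^{sn} − γ) ≥ m if and only if v(γ·γ₀^{−n} − 1) ≥ m. (Equivalently, the set {γ ∈ Γ : v(σ^{sn} − γ) ≥ m} equals Γ_m·γ₀^n, where Γ_m = {γ ∈ Γ : v(γ − 1) ≥ m}.) -/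
/-!
The elements of valuation at least `m` form a two-sided ideal `I` of `R`: nonnegativity of `v`
is what makes `I` absorb multiplication by arbitrary elements. So the claim is about congruences
modulo `I`. From `σ ^ s ≡ γ₀` we get `σ ^ (s * n) ≡ γ₀ ^ n`, and multiplying by the unit
`γ₀⁻¹ ^ n` turns `γ₀ ^ n ≡ γ` into `γ * γ₀⁻¹ ^ n ≡ 1`.
-/

section

variable {R : Type*} [Ring R] {v : R → WithTop ℤ}

theorem valuation_nonneg (hv0 : v 0 = ⊤) (hnonneg : ∀ x : R, x ≠ 0 → 0 ≤ v x) (x : R) :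
    0 ≤ v x := by
  rcases eq_or_ne x 0 with rfl | hx
  · simp [hv0]
  · exact hnonneg x hx

theorem valuation_le_mul_left (hvmul : ∀ x y : R, v (x * y) = v x + v y)
    (hv : ∀ x : R, 0 ≤ v x) (x y : R) : v y ≤ v (x * y) := by
  rw [hvmul]
  exact le_add_of_nonneg_left (hv x)

theorem valuation_le_mul_right (hvmul : ∀ x y : R, v (x * y) = v x + v y)
    (hv : ∀ x : R, 0 ≤ v x) (x y : R) : v x ≤ v (x * y) := by
  rw [hvmul]
  exact le_add_of_nonneg_right (hv y)

def valuationIdeal (hv0 : v 0 = ⊤) (hvmul : ∀ x y : R, v (x * y) = v x + v y)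
    (hvadd : ∀ x y : R, min (v x) (v y) ≤ v (x + y)) (hv : ∀ x : R, 0 ≤ v x) (m : ℕ) :
    TwoSidedIdeal R :=
  .mk' {x | (m : WithTop ℤ) ≤ v x} (by simp [hv0])
    (fun hx hy ↦ (le_min hx hy).trans (hvadd _ _))
    (fun {x} hx ↦ neg_one_mul x ▸ hx.trans (valuation_le_mul_left hvmul hv _ _))
    (fun hy ↦ hy.trans (valuation_le_mul_left hvmul hv _ _))
    (fun hx ↦ hx.trans (valuation_le_mul_right hvmul hv _ _))

theorem valuationIdeal_rel_iff (hv0 : v 0 = ⊤) (hvmul : ∀ x y : R, v (x * y) = v x + v y)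
    (hvadd : ∀ x y : R, min (v x) (v y) ≤ v (x + y)) (hv : ∀ x : R, 0 ≤ v x) (m : ℕ) (x y : R) :
    (valuationIdeal hv0 hvmul hvadd hv m).ringCon x y ↔ (m : WithTop ℤ) ≤ v (x - y) := by
  rw [TwoSidedIdeal.rel_iff, valuationIdeal, TwoSidedIdeal.mem_mk']
  rfl

end

theorem valuation_subsequence_coset_general {R : Type*} [Ring R]
    (v : R → WithTop ℤ)
    (hv0 : ∀ x : R, v x = ⊤ ↔ x = 0)
    (hvmul : ∀ x y : R, v (x * y) = v x + v y)
    (hvadd : ∀ x y : R, min (v x) (v y) ≤ v (x + y))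
    (hnonneg : ∀ x : R, x ≠ 0 → 0 ≤ v x)
    (Γ : Subgroup Rˣ)
    (σ : R) (m : ℕ)
    (s : ℕ)
    (γ₀ : Rˣ) (hsm : (m : WithTop ℤ) ≤ v (σ ^ s - (γ₀ : R))) :
    ∀ n : ℕ, 1 ≤ n → ∀ γ : Rˣ, γ ∈ Γ →
      ((m : WithTop ℤ) ≤ v (σ ^ (s * n) - (γ : R)) ↔
        (m : WithTop ℤ) ≤ v ((γ : R) * ((γ₀⁻¹ ^ n : Rˣ) : R) - 1)) := by
  intro n _ γ _
  have hvz : v 0 = ⊤ := (hv0 0).2 rfl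
  have hv := valuation_nonneg hvz hnonneg
  set c := (valuationIdeal hvz hvmul hvadd hv m).ringCon
  have mk_eq_mk_iff (x y : R) : c.mk' x = c.mk' y ↔ (m : WithTop ℤ) ≤ v (x - y) :=
    c.eq.trans (valuationIdeal_rel_iff hvz hvmul hvadd hv m x y)
  have hpow : c.mk' (σ ^ (s * n)) = c.mk' (γ₀ ^ n : Rˣ) := by
    rw [pow_mul, map_pow, (mk_eq_mk_iff _ _).2 hsm, Units.val_pow_eq_pow_val, map_pow]
  rw [← mk_eq_mk_iff, ← mk_eq_mk_iff, hpow, map_mul, map_one, eq_comm, inv_pow]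
  exact (Units.mul_inv_eq_one (u := Units.map c.mk'.toMonoidHom (γ₀ ^ n))).symm

/-- If s is the least positive integer with v(σ^s − γ) ≥ m for some γ in a finite subgroup Γ
of units, and γ₀ ∈ Γ satisfies v(σ^s − γ₀) ≥ m, then for n ≥ 1 and γ ∈ Γ one has
v(σ^{sn} − γ) ≥ m if and only if v(γ·γ₀^{−n} − 1) ≥ m. -/
theorem valuation_subsequence_coset {R : Type*} [Ring R]
    (v : R → WithTop ℤ)
    (hv0 : ∀ x : R, v x = ⊤ ↔ x = 0)
    (hvmul : ∀ x y : R, v (x * y) = v x + v y)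
    (hvadd : ∀ x y : R, min (v x) (v y) ≤ v (x + y))
    (hnonneg : ∀ x : R, x ≠ 0 → 0 ≤ v x)
    (Γ : Subgroup Rˣ) (hΓfin : (Γ : Set Rˣ).Finite)
    (σ : R) (m : ℕ)
    (s : ℕ) (hs : 0 < s)
    (γ₀ : Rˣ) (hγ₀ : γ₀ ∈ Γ) (hsm : (m : WithTop ℤ) ≤ v (σ ^ s - (γ₀ : R)))
    (hleast : ∀ s' : ℕ, 0 < s' →
      (∃ γ : Rˣ, γ ∈ Γ ∧ (m : WithTop ℤ) ≤ v (σ ^ s' - (γ : R))) → s ≤ s') :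
    ∀ n : ℕ, 1 ≤ n → ∀ γ : Rˣ, γ ∈ Γ →
      ((m : WithTop ℤ) ≤ v (σ ^ (s * n) - (γ : R)) ↔
        (m : WithTop ℤ) ≤ v ((γ : R) * ((γ₀⁻¹ ^ n : Rˣ) : R) - 1)) :=
  valuation_subsequence_coset_general v hv0 hvmul hvadd hnonneg Γ σ m s γ₀ hsm
end
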